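/- arXiv:1609.05264 — 3 statements merged into one kernel-verified Lean document; each statement's English description precedes it below -/
import Mathlib

section
/- If the set P_i^{ID} is connected and is disjoint from ⋃_{j≠i} P_j, then for every k∈P_i^{ID} the additive subset P_i^{add}(k) exists and is unique: there is a unique largest connected subset of Q satisfying conditions (1) and (2) of the additive-subset definition, and it contains every connected subset of Q satisfying those conditions. -/
open scoped Classical ENNReal

noncomputable section

universe u

/-- A weighted graph environment `G(Q) = (Q, E)` with undirected edges and
positive edge weights. -/
structure Env (V : Type u) where
  adj : V → V → Prop
  adj_symm : ∀ u v, adj u v → adj v u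
  adj_irrefl : ∀ v, ¬ adj v v
  w : V → V → ℝ
  w_pos : ∀ u v, adj u v → 0 < w u v
  w_symm : ∀ u v, w u v = w v u

variable {V : Type u}

/-- `PathIn G S p` : `p` is a (nonempty) walk of `G` all of whose vertices lie in `S`. -/
def PathIn (G : Env V) (S : Set V) : List V → Prop
  | [] => False
  | [v] => v ∈ S
  | u :: v :: rest => u ∈ S ∧ G.adj u v ∧ PathIn G S (v :: rest)

/-- Total weighted length of a walk. -/
def pathLen (G : Env V) : List V → ℝ≥0∞
  | [] => 0
  | [_] => 0
  | u :: v :: rest => ENNReal.ofReal (G.w u v) + pathLen G (v :: rest)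

/-- Weighted shortest-path distance between two vertices inside the subgraph of `G`
induced on `S` (`∞` if no connecting path inside `S` exists). -/
def dIn (G : Env V) (S : Set V) (a b : V) : ℝ≥0∞ :=
  sInf {L : ℝ≥0∞ | ∃ p : List V, PathIn G S p ∧ p.head? = some a ∧
    p.getLast? = some b ∧ pathLen G p = L}

/-- Length of a shortest path inside the subgraph induced on `S` from `a` to the set `B`. -/
def dInSet (G : Env V) (S : Set V) (a : V) (B : Set V) : ℝ≥0∞ :=
  ⨅ b ∈ B, dIn G S a b

/-- A subset `S` is connected if its induced subgraph is connected. -/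
def ConnIn (G : Env V) (S : Set V) : Prop :=
  ∀ a ∈ S, ∀ b ∈ S, ∃ p : List V, PathIn G S p ∧ p.head? = some a ∧ p.getLast? = some b

/-- A vertex `k` is adjacent to a set `S`. -/
def AdjTo (G : Env V) (k : V) (S : Set V) : Prop :=
  k ∉ S ∧ ∃ v ∈ S, G.adj k v

/-- An `m`-covering of the vertex set. -/
def IsCovering {m : ℕ} (P : Fin m → Set V) : Prop :=
  (∀ v : V, ∃ i, v ∈ P i) ∧ ∀ i, (P i).Nonempty

/-- An `m`-partition of the vertex set. -/
def IsPartition {m : ℕ} (P : Fin m → Set V) : Prop :=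
  IsCovering P ∧ ∀ i j : Fin m, i ≠ j → P i ∩ P j = ∅

/-- Conditions (1) and (2) of the additive-subset definition (together with
connectivity of the candidate set `S`). -/
def AddCond {m : ℕ} (G : Env V) (s : Fin m → ℝ) (P : Fin m → Set V) (c : Fin m → V)
    (T : Fin m → ℝ) (i : Fin m) (Pid : Set V) (k : V) (S : Set V) : Prop :=
  ConnIn G S ∧ Pid ⊆ S ∧
    ∀ j : Fin m, j ≠ i → ∀ h ∈ S ∩ P j,
      T j = 0 ∧
      ENNReal.ofReal (1 / s i) * dIn G S h k < ENNReal.ofReal (1 / s j) * dIn G (P j) h (c j)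

/-- `S` is *the* additive subset `P_i^add(k)` : the largest connected subset
satisfying conditions (1) and (2); it contains every subset satisfying them. -/
def IsAddSet {m : ℕ} (G : Env V) (s : Fin m → ℝ) (P : Fin m → Set V) (c : Fin m → V)
    (T : Fin m → ℝ) (i : Fin m) (Pid : Set V) (k : V) (S : Set V) : Prop :=
  AddCond G s P c T i Pid k S ∧ ∀ S' : Set V, AddCond G s P c T i Pid k S' → S' ⊆ S

/-- The coverage cost `H(c, P, t)`. -/
def Hcost {m : ℕ} [Fintype V] (G : Env V) (s : Fin m → ℝ) (Φ : V → ℝ → ℝ)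
    (c : Fin m → V) (P : Fin m → Set V) (t : ℝ) : ℝ≥0∞ :=
  ∑ k : V,
    sInf {x : ℝ≥0∞ | ∃ i : Fin m, k ∈ P i ∧ x = ENNReal.ofReal (1 / s i) * dIn G (P i) k (c i)} *
      ENNReal.ofReal (Φ k t)

/-- The complete state maintained by the base station together with all the
agents' local variables. -/
structure CovState (V : Type u) (m : ℕ) where
  P : Fin m → Set V
  c : Fin m → V
  ID : V → Fin m
  T : Fin m → ℝ
  ω : Fin m → ℝ
  PA : Fin m → Set V
  cA : Fin m → V
  Ppd : Fin m → Set V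
  τA : Fin m → ℝ
  ωA : Fin m → ℝ

namespace CovState

variable {m : ℕ}

/-- `P_i^ID`, the set of vertices whose identifier equals `i`. -/
def Pid (σ : CovState V m) (i : Fin m) : Set V := {k | σ.ID k = i}

/-- The local likelihood function `Φ_i^A`. -/
def ΦA (σ : CovState V m) (Φ : V → ℝ → ℝ) (i : Fin m) (k : V) (t : ℝ) : ℝ :=
  if k ∈ σ.PA i ∧ (σ.τA i ≤ t - σ.ωA i ∨ k ∉ σ.Ppd i) then Φ k t else 0

/-- The prohibited region `Proh_i(t)`. -/
def Proh (σ : CovState V m) (i : Fin m) (t : ℝ) : Set V :=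
  {k ∈ σ.PA i | t - σ.ωA i < σ.τA i ∧ k ∈ σ.Ppd i}

/-- Continuous (flow) evolution of the state for `δ` time units: only the timers
change, each decreasing at unit rate until reaching `0`. -/
def decay (σ : CovState V m) (δ : ℝ) : CovState V m :=
  { σ with T := fun i => max (σ.T i - δ) 0 }

end CovState

/-- The trivial branch of Algorithm 1 (`T_i > 0` and `P_i^* = P_i`): only the
timing variables of the communicating agent are touched. -/
def NoopUpdate {m : ℕ} (i : Fin m) (t0 : ℝ) (σ σ' : CovState V m) : Prop :=
  σ' = { σ with τA := Function.update σ.τA i (σ.τA i - t0 + σ.ω i),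
                ωA := Function.update σ.ωA i t0,
                ω := Function.update σ.ω i t0 }

/-- The main branch of Algorithm 1 (together with the timer update, Algorithm 2),
executed upon an exchange between the base station and agent `i` at time `t0`. -/
def FullUpdate {m : ℕ} [Fintype V] (G : Env V) (s : Fin m → ℝ) (Φ : V → ℝ → ℝ)
    (Δbar ΔH : ℝ) (i : Fin m) (t0 : ℝ) (σ σ' : CovState V m) : Prop :=
  ∃ (cstar : V) (Pstar : Set V),
    -- `(cstar, Pstar)` is one of the candidate configurations:
    ((cstar = σ.c i ∧ Pstar = σ.Pid i) ∨
      (cstar ∈ σ.Pid i ∧ IsAddSet G s σ.P σ.c σ.T i (σ.Pid i) cstar Pstar)) ∧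
    -- and it minimizes the cost `H` among all candidate configurations:
    (∀ (k : V) (S : Set V),
      ((k = σ.c i ∧ S = σ.Pid i) ∨
        (k ∈ σ.Pid i ∧ IsAddSet G s σ.P σ.c σ.T i (σ.Pid i) k S)) →
      Hcost G s Φ (Function.update σ.c i cstar) (Function.update σ.P i Pstar) t0 ≤
        Hcost G s Φ (Function.update σ.c i k) (Function.update σ.P i S) t0) ∧
    σ'.P = Function.update σ.P i Pstar ∧
    σ'.PA = Function.update σ.PA i Pstar ∧
    σ'.c = Function.update σ.c i cstar ∧
    σ'.cA = Function.update σ.cA i cstar ∧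
    σ'.Ppd = Function.update σ.Ppd i (Pstar \ σ.Pid i) ∧
    σ'.ω = Function.update σ.ω i t0 ∧
    σ'.ωA = Function.update σ.ωA i t0 ∧
    σ'.ID = (fun k => if k ∈ Pstar then i else σ.ID k) ∧
    (∀ j : Fin m, j ≠ i → (σ.P j ∩ Pstar).Nonempty → σ'.T j = σ.ω j + Δbar - t0) ∧
    (∀ j : Fin m, j ≠ i → ¬(σ.P j ∩ Pstar).Nonempty → σ'.T j = σ.T j) ∧
    -- `T_i := Δ_max^Bf + Δ_H`, where `Δ_max^Bf` is as in Algorithm 2 (max ∅ := 0):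
    σ'.T i =
      max
        (sSup {x : ℝ | ∃ k ∈ σ.P i \ Pstar,
          x = (1 / s i) * (dInSet G (σ.P i) k (Pstar \ (Pstar \ σ.Pid i))).toReal})
        (sSup {x : ℝ | ∃ j : Fin m, j ≠ i ∧ (σ.P j ∩ Pstar).Nonempty ∧
          x = σ.ω j + Δbar +
            sSup {y : ℝ | ∃ k ∈ σ.P j ∩ Pstar,
              y = (1 / s j) * (dInSet G (σ.P j) k (σ.P j \ Pstar)).toReal} - t0}) + ΔH ∧
    -- `τ_i^A := Δ_max^Bf`:
    σ'.τA = Function.update σ.τA i (σ'.T i - ΔH)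

/-- The one-to-base-station update of Algorithm 1 performed at time `t0` upon an
exchange with agent `i`; `σ` is the state just before and `σ'` just after. -/
def UpdateAt {m : ℕ} [Fintype V] (G : Env V) (s : Fin m → ℝ) (Φ : V → ℝ → ℝ)
    (Δbar ΔH : ℝ) (i : Fin m) (t0 : ℝ) (σ σ' : CovState V m) : Prop :=
  (0 < σ.T i ∧ σ.Pid i = σ.P i ∧ NoopUpdate i t0 σ σ') ∨
  (¬(0 < σ.T i ∧ σ.Pid i = σ.P i) ∧ FullUpdate G s Φ Δbar ΔH i t0 σ σ')

/-- Assumption 1 (initialization). -/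
def InitOK {m : ℕ} (G : Env V) (ΔH : ℝ) (σ : CovState V m) : Prop :=
  IsPartition σ.P ∧ (∀ i, ConnIn G (σ.P i)) ∧
    ∀ i : Fin m,
      σ.PA i = σ.P i ∧ σ.P i = σ.Pid i ∧ σ.cA i = σ.c i ∧ σ.c i ∈ σ.P i ∧
      σ.Ppd i = ∅ ∧ σ.T i = 0 ∧ σ.ω i = 0 ∧ σ.ωA i = 0 ∧ σ.τA i = -ΔH

/-- An execution of the asynchronous one-to-base-station coverage scheme:
exchanges occur at the times `etime n` with the agents `eagent n`, successive
exchanges are separated by at least `Δlow`, each agent communicates at least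
every `Δ̄` time units, the state is initialized according to Assumption 1,
flows (only the timers decay) in between exchanges, and jumps according to
Algorithm 1 at each exchange. -/
structure Execution [Fintype V] (G : Env V) (m : ℕ) (s : Fin m → ℝ) (Φ : V → ℝ → ℝ)
    (Δlow Δbar ΔH : ℝ) where
  etime : ℕ → ℝ
  eagent : ℕ → Fin m
  state : ℝ → CovState V m
  s_pos : ∀ i, 0 < s i
  Δlow_pos : 0 < Δlow
  Δbar_pos : 0 < Δbar
  ΔH_pos : 0 < ΔH
  Φ_nonneg : ∀ k t, 0 ≤ Φ k t
  Φ_sum : ∀ t : ℝ, ∑ k : V, Φ k t = 1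
  etime_pos : ∀ n, 0 < etime n
  etime_sep : ∀ n, etime n + Δlow ≤ etime (n + 1)
  persistent : ∀ (i : Fin m) (t : ℝ), 0 ≤ t →
    ∃ n, eagent n = i ∧ t ≤ etime n ∧ etime n ≤ t + Δbar
  init : InitOK G ΔH (state 0)
  flow : ∀ t₁ t₂ : ℝ, 0 ≤ t₁ → t₁ ≤ t₂ →
    (∀ n, ¬(t₁ < etime n ∧ etime n ≤ t₂)) →
    state t₂ = (state t₁).decay (t₂ - t₁)
  jump : ∀ (n : ℕ) (t₁ : ℝ), 0 ≤ t₁ → t₁ < etime n →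
    (∀ p, ¬(t₁ < etime p ∧ etime p < etime n)) →
    UpdateAt G s Φ Δbar ΔH (eagent n) (etime n)
      ((state t₁).decay (etime n - t₁)) (state (etime n))

/-- Twice the sum, over the edges of `G`, of the graph distance between the
endpoints, halved (i.e. the sum over unordered edges). -/
def edgeSum [Fintype V] (G : Env V) : ℝ :=
  (1 / 2) * ∑ p : V × V, if G.adj p.1 p.2 then (dIn G Set.univ p.1 p.2).toReal else 0

/-- `d̄ := max_i (1/s_i) · Σ_{{k1,k2} ∈ E} d_Q(k1,k2)`. -/
def dbar {m : ℕ} [Fintype V] (G : Env V) (s : Fin m → ℝ) : ℝ :=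
  sSup {x : ℝ | ∃ i : Fin m, x = (1 / s i) * edgeSum G}

end

/-!
Admissible sets (connected sets satisfying (1) and (2)) are closed under unions of nonempty
families: each contains `k ∈ P_i^ID`, so their union is connected, and enlarging a set can only
shorten distances inside it, so the strict inequalities of (2) persist. Since `P_i^ID` meets no
`P_j` with `j ≠ i`, it is itself admissible, so the union of all admissible sets is the largest
one, and a largest one is unique.
-/

namespace PathIn

variable {V : Type*} {G : Env V}

theorem mono {S T : Set V} (hST : S ⊆ T) : ∀ {p : List V}, PathIn G S p → PathIn G T p
  | [], h => h
  | [_], h => hST h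
  | _ :: _ :: _, h => ⟨hST h.1, h.2.1, mono hST h.2.2⟩

theorem append {S : Set V} {k : V} :
    ∀ {p q : List V}, PathIn G S p → p.getLast? = some k → PathIn G S (k :: q) →
      PathIn G S (p ++ q)
  | [], _, hp, _, _ => hp.elim
  | [u], _, _, hl, hq => by
      obtain rfl : u = k := by simpa using hl
      exact hq
  | _ :: _ :: _, _, hp, hl, hq => ⟨hp.1, hp.2.1, append hp.2.2 (by simpa using hl) hq⟩

end PathIn

section

variable {V : Type*} {G : Env V}

def Joins (G : Env V) (S : Set V) (a b : V) : Prop :=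
  ∃ p : List V, PathIn G S p ∧ p.head? = some a ∧ p.getLast? = some b

theorem Joins.mono {S T : Set V} (hST : S ⊆ T) {a b : V} (h : Joins G S a b) : Joins G T a b :=
  let ⟨p, hp, ha, hb⟩ := h
  ⟨p, hp.mono hST, ha, hb⟩

theorem Joins.trans {S : Set V} {a k b : V} (hak : Joins G S a k) (hkb : Joins G S k b) :
    Joins G S a b := by
  obtain ⟨p, hp, hpa, hpk⟩ := hak
  obtain ⟨_ | ⟨k', q⟩, hq, hqk, hqb⟩ := hkb
  · exact hq.elim
  obtain rfl : k' = k := by simpa using hqk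
  refine ⟨p ++ q, hp.append hpk hq, by simp [hpa], ?_⟩
  rw [List.getLast?_cons] at hqb
  cases h : q.getLast? <;> simp_all

theorem connIn_sUnion {F : Set (Set V)} {k : V} (hconn : ∀ S ∈ F, ConnIn G S)
    (hk : ∀ S ∈ F, k ∈ S) : ConnIn G (⋃₀ F) := by
  rintro a ⟨S₁, hS₁, ha⟩ b ⟨S₂, hS₂, hb⟩
  have hak : Joins G S₁ a k := hconn S₁ hS₁ a ha k (hk S₁ hS₁)
  have hkb : Joins G S₂ k b := hconn S₂ hS₂ k (hk S₂ hS₂) b hb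
  exact (hak.mono (Set.subset_sUnion_of_mem hS₁)).trans
    (hkb.mono (Set.subset_sUnion_of_mem hS₂))

theorem dIn_anti {S T : Set V} (hST : S ⊆ T) (a b : V) : dIn G T a b ≤ dIn G S a b :=
  sInf_le_sInf fun _ ⟨p, hp, ha, hb, hL⟩ => ⟨p, hp.mono hST, ha, hb, hL⟩

variable {m : ℕ} {s : Fin m → ℝ} {P : Fin m → Set V} {c : Fin m → V} {T : Fin m → ℝ}
  {i : Fin m} {Pid : Set V} {k : V}

theorem addCond_self (hconn : ConnIn G Pid) (hdisj : ∀ j : Fin m, j ≠ i → Pid ∩ P j = ∅) :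
    AddCond G s P c T i Pid k Pid := by
  refine ⟨hconn, subset_rfl, fun j hj h hh => ?_⟩
  rw [hdisj j hj] at hh
  exact hh.elim

theorem addCond_sUnion {F : Set (Set V)} (hk : k ∈ Pid) (hF : F.Nonempty)
    (hadm : ∀ S ∈ F, AddCond G s P c T i Pid k S) : AddCond G s P c T i Pid k (⋃₀ F) := by
  obtain ⟨S₀, hS₀⟩ := hF
  refine ⟨connIn_sUnion (fun S hS => (hadm S hS).1) (fun S hS => (hadm S hS).2.1 hk),
    (hadm S₀ hS₀).2.1.trans (Set.subset_sUnion_of_mem hS₀), ?_⟩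
  rintro j hj h ⟨⟨S, hS, hhS⟩, hhP⟩
  obtain ⟨hTj, hlt⟩ := (hadm S hS).2.2 j hj h ⟨hhS, hhP⟩
  refine ⟨hTj, lt_of_le_of_lt ?_ hlt⟩
  gcongr
  exact dIn_anti (Set.subset_sUnion_of_mem hS) h k

theorem IsAddSet.eq {S S' : Set V} (hS : IsAddSet G s P c T i Pid k S)
    (hS' : IsAddSet G s P c T i Pid k S') : S = S' :=
  (hS'.2 S hS.1).antisymm (hS.2 S' hS'.1)

end

theorem additive_subset_exists_unique_general {V : Type*} {m : ℕ} (G : Env V)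
    (s : Fin m → ℝ)
    (P : Fin m → Set V) (c : Fin m → V) (T : Fin m → ℝ)
    (i : Fin m) (PidSet : Set V)
    (hconn : ConnIn G PidSet)
    (hdisj : ∀ j : Fin m, j ≠ i → PidSet ∩ P j = ∅) :
    ∀ k ∈ PidSet, ∃! S : Set V, IsAddSet G s P c T i PidSet k S := by
  intro k hk
  set F := {S | AddCond G s P c T i PidSet k S}
  have hmax : IsAddSet G s P c T i PidSet k (⋃₀ F) :=
    ⟨addCond_sUnion hk ⟨PidSet, addCond_self hconn hdisj⟩ fun _ => id,
      fun _ hS => Set.subset_sUnion_of_mem hS⟩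
  exact ⟨⋃₀ F, hmax, fun _ hS => hS.eq hmax⟩

/-- Proposition 1, well-posedness of the additive subset.
If `P_i^ID` is connected and disjoint from `⋃_{j ≠ i} P_j`, then for every
`k ∈ P_i^ID` the additive subset `P_i^add(k)` exists and is unique: there is a
unique largest connected subset satisfying conditions (1) and (2), and it
contains every connected subset satisfying those conditions. -/
theorem additive_subset_exists_unique {V : Type*} {m : ℕ} (G : Env V)
    (s : Fin m → ℝ) (hs : ∀ i, 0 < s i)
    (P : Fin m → Set V) (c : Fin m → V) (T : Fin m → ℝ) (hT : ∀ j, 0 ≤ T j)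
    (i : Fin m) (PidSet : Set V)
    (hconn : ConnIn G PidSet)
    (hdisj : ∀ j : Fin m, j ≠ i → PidSet ∩ P j = ∅) :
    ∀ k ∈ PidSet, ∃! S : Set V, IsAddSet G s P c T i PidSet k S :=
  additive_subset_exists_unique_general G s P c T i PidSet hconn hdisj
end

section
/- Suppose Assumption 1 holds and that, upon each exchange, the base station and the communicating agent update their respective variables via Algorithm 1. Then at every time t≥0 and for every i: c_i∈P_i, and c_i≠c_j whenever i≠j. Moreover, ID_{c_i}=i for every i at every time. -/
open scoped Classical ENNReal

section Aux

variable {V : Type*} {m : ℕ}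

/-- The invariant: each generator lies in its own cell and carries its own identifier. -/
def GenInv (σ : CovState V m) : Prop :=
  ∀ i : Fin m, σ.c i ∈ σ.P i ∧ σ.ID (σ.c i) = i

lemma dIn_self_zero (G : Env V) {S : Set V} {a : V} (ha : a ∈ S) :
    dIn G S a a = 0 := by
  refine le_antisymm (sInf_le ?_) zero_le
  exact ⟨[a], by simpa [PathIn] using ha, rfl, rfl, rfl⟩

lemma genInv_decay {σ : CovState V m} (h : GenInv σ) (δ : ℝ) :
    GenInv (σ.decay δ) := h

lemma decay_Pid (σ : CovState V m) (δ : ℝ) (i : Fin m) :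
    (σ.decay δ).Pid i = σ.Pid i := rfl

lemma genInv_init {G : Env V} {ΔH : ℝ} {σ : CovState V m}
    (h : InitOK G ΔH σ) : GenInv σ := by
  intro i
  obtain ⟨-, -, h3⟩ := h
  obtain ⟨-, hPid, -, hc, -⟩ := h3 i
  refine ⟨hc, ?_⟩
  have : σ.c i ∈ σ.Pid i := hPid ▸ hc
  exact this

lemma genInv_update [Fintype V] {G : Env V} {s : Fin m → ℝ} {Φ : V → ℝ → ℝ}
    {Δbar ΔH : ℝ} {i : Fin m} {t0 : ℝ} {σ σ' : CovState V m}
    (hs : ∀ j, 0 < s j)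
    (hinv : GenInv σ) (hup : UpdateAt G s Φ Δbar ΔH i t0 σ σ') : GenInv σ' := by
  rcases hup with ⟨-, -, hσ'⟩ | ⟨-, hfull⟩
  · rw [hσ']
    intro j
    exact hinv j
  · obtain ⟨cstar, Pstar, hcand, -, hP, -, hc, -, -, -, -, hID, -⟩ := hfull
    -- `cstar ∈ Pstar`
    have hcs : cstar ∈ Pstar := by
      rcases hcand with ⟨hc1, hP1⟩ | ⟨hc2, ⟨⟨-, hPid, -⟩, -⟩⟩
      · rw [hP1, hc1]
        exact (hinv i).2
      · exact hPid hc2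
    -- generators of other agents are not in `Pstar`
    have hnot : ∀ j : Fin m, j ≠ i → σ.c j ∉ Pstar := by
      intro j hj hmem
      rcases hcand with ⟨-, hP1⟩ | ⟨-, ⟨⟨-, -, hcond⟩, -⟩⟩
      · rw [hP1] at hmem
        have : σ.ID (σ.c j) = i := hmem
        exact hj ((hinv j).2 ▸ this)
      · have := (hcond j hj (σ.c j) ⟨hmem, (hinv j).1⟩).2
        rw [dIn_self_zero G (hinv j).1, mul_zero] at this
        exact (ENNReal.not_lt_zero this)
    intro j
    by_cases hji : j = i
    · subst hji
      constructor
      · rw [hP, hc, Function.update_self, Function.update_self]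
        exact hcs
      · rw [hID, hc, Function.update_self]
        exact if_pos hcs
    · constructor
      · rw [hP, hc, Function.update_of_ne hji, Function.update_of_ne hji]
        exact (hinv j).1
      · rw [hID, hc, Function.update_of_ne hji]
        exact (if_neg (hnot j hji)).trans (hinv j).2

end Aux

/-- Theorem 2, statement 3.  Under Assumption 1 and
Algorithm 1 updates, at every time `t ≥ 0` and for every `i`: `c_i ∈ P_i`,
`c_i ≠ c_j` whenever `i ≠ j`, and moreover `ID_{c_i} = i`. -/
theorem generators_properties {V : Type*} [Fintype V] [DecidableEq V] {m : ℕ}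
    (G : Env V) (s : Fin m → ℝ) (Φ : V → ℝ → ℝ) (Δlow Δbar ΔH : ℝ)
    (E : Execution G m s Φ Δlow Δbar ΔH) :
    ∀ t : ℝ, 0 ≤ t → ∀ i : Fin m,
      (E.state t).c i ∈ (E.state t).P i ∧
      (∀ j : Fin m, i ≠ j → (E.state t).c i ≠ (E.state t).c j) ∧
      (E.state t).ID ((E.state t).c i) = i := by
  have hsmono : StrictMono E.etime :=
    strictMono_nat_of_lt_succ fun n =>
      lt_of_lt_of_le (by linarith [E.Δlow_pos]) (E.etime_sep n)
  -- lower bound on event times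
  have hlb : ∀ n : ℕ, E.etime 0 + n * Δlow ≤ E.etime n := by
    intro n
    induction n with
    | zero => simp
    | succ k ih =>
      have := E.etime_sep k
      push_cast
      linarith
  -- invariant at event times
  have hev : ∀ n : ℕ, GenInv (E.state (E.etime n)) := by
    intro n
    induction n with
    | zero =>
      have hj := E.jump 0 0 le_rfl (E.etime_pos 0) (fun p hp => by
        have := hsmono.lt_iff_lt.mp hp.2
        exact absurd this (Nat.not_lt_zero p))
      exact genInv_update E.s_pos (genInv_decay (genInv_init E.init) _) hj
    | succ k ih =>
      have hj := E.jump (k + 1) (E.etime k) (E.etime_pos k).le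
        (hsmono (Nat.lt_succ_self k)) (fun p hp => by
          have h1 := hsmono.lt_iff_lt.mp hp.1
          have h2 := hsmono.lt_iff_lt.mp hp.2
          omega)
      exact genInv_update E.s_pos (genInv_decay ih _) hj
  -- invariant at every time
  have hall : ∀ t : ℝ, 0 ≤ t → GenInv (E.state t) := by
    intro t ht
    by_cases hex : ∃ n : ℕ, E.etime n ≤ t
    · obtain ⟨n₀, hn₀⟩ := hex
      set B := ⌈t / Δlow⌉₊ with hB
      have hbound : ∀ p : ℕ, E.etime p ≤ t → p ≤ B := by
        intro p hp
        have h1 := hlb p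
        have h2 := E.etime_pos 0
        have h3 : (p : ℝ) * Δlow ≤ t := by linarith
        have h4 : (p : ℝ) ≤ t / Δlow := (le_div_iff₀ E.Δlow_pos).mpr h3
        have h5 : (p : ℝ) ≤ (B : ℝ) := h4.trans (Nat.le_ceil _)
        exact_mod_cast h5
      set N := Nat.findGreatest (fun n => E.etime n ≤ t) B with hN
      have hNspec : E.etime N ≤ t :=
        Nat.findGreatest_spec (P := fun n => E.etime n ≤ t) (hbound n₀ hn₀) hn₀
      have hflow := E.flow (E.etime N) t (E.etime_pos N).le hNspec (fun p hp => by
        have hpB := hbound p hp.2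
        have hNp : N < p := hsmono.lt_iff_lt.mp hp.1
        exact Nat.findGreatest_is_greatest hNp hpB hp.2)
      rw [hflow]
      exact genInv_decay (hev N) _
    · push_neg at hex
      have hflow := E.flow 0 t le_rfl ht (fun n hn => absurd hn.2 (not_le.mpr (hex n)))
      rw [hflow]
      exact genInv_decay (genInv_init E.init) _
  intro t ht i
  have h := hall t ht
  refine ⟨(h i).1, ?_, (h i).2⟩
  intro j hij hcc
  apply hij
  have := (h i).2
  rw [hcc, (h j).2] at this
  exact this.symm
end

section
/- Suppose Assumption 1 holds and that, upon each exchange, the base station and the communicating agent update their respective variables via Algorithm 1. Then for every k∈Q and every time t≥0, the vertex k belongs to at least one agent's coverage region P_i. -/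
open scoped Classical ENNReal

/-! Every update of Algorithm 1 keeps each vertex inside the region of the agent its
identifier names: the new region `P_i^*` contains `P_i^{ID}`, and the identifiers are
reassigned to `i` exactly on `P_i^*`. The flow only moves timers, and at time `0` the
regions are the identifier classes, so this invariant holds along the whole execution. -/

namespace CovState

variable {V : Type*} {m : ℕ}

def IDConsistent (σ : CovState V m) : Prop := ∀ k : V, k ∈ σ.P (σ.ID k)

theorem IDConsistent.decay {σ : CovState V m} (h : σ.IDConsistent) (δ : ℝ) :
    (σ.decay δ).IDConsistent :=
  h

end CovState

section Invariant

variable {V : Type*} {m : ℕ} {G : Env V} {s : Fin m → ℝ} {Φ : V → ℝ → ℝ}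
  {Δlow Δbar ΔH : ℝ} {σ σ' : CovState V m} {i : Fin m} {t0 : ℝ}

theorem InitOK.idConsistent (h : InitOK G ΔH σ) : σ.IDConsistent := fun k =>
  ((h.2.2 (σ.ID k)).2.1).symm ▸ rfl

theorem FullUpdate.idConsistent [Fintype V] (h : FullUpdate G s Φ Δbar ΔH i t0 σ σ')
    (hσ : σ.IDConsistent) : σ'.IDConsistent := by
  obtain ⟨_, Pstar, hcand, -, hP, -, -, -, -, -, -, hID, -⟩ := h
  have hPid : σ.Pid i ⊆ Pstar := by
    rcases hcand with ⟨-, rfl⟩ | ⟨-, hadd⟩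
    · exact subset_rfl
    · exact hadd.1.2.1
  intro k
  rw [hP, hID]
  by_cases hk : k ∈ Pstar
  · simp [hk]
  · have hne : σ.ID k ≠ i := fun he => hk (hPid he)
    simpa [hk, Function.update_of_ne hne] using hσ k

theorem UpdateAt.idConsistent [Fintype V] (h : UpdateAt G s Φ Δbar ΔH i t0 σ σ')
    (hσ : σ.IDConsistent) : σ'.IDConsistent := by
  rcases h with ⟨-, -, rfl⟩ | ⟨-, hfull⟩
  · exact hσ
  · exact hfull.idConsistent hσ

namespace Execution

variable [Fintype V] (E : Execution G m s Φ Δlow Δbar ΔH)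

theorem etime_strictMono : StrictMono E.etime :=
  strictMono_nat_of_lt_succ fun n => by linarith [E.etime_sep n, E.Δlow_pos]

theorem natCast_mul_le_etime (n : ℕ) : n * Δlow ≤ E.etime n := by
  induction n with
  | zero => simpa using (E.etime_pos 0).le
  | succ n ih => push_cast; linarith [E.etime_sep n]

theorem exists_le_etime (t : ℝ) : ∃ n, t ≤ E.etime n := by
  obtain ⟨n, hn⟩ := exists_nat_gt (t / Δlow)
  refine ⟨n, le_trans ?_ (E.natCast_mul_le_etime n)⟩
  exact ((div_lt_iff₀ E.Δlow_pos).mp hn).le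

theorem idConsistent_of_no_exchange_between {t₁ t₂ : ℝ} (h₀ : 0 ≤ t₁) (h₁₂ : t₁ ≤ t₂)
    (hno : ∀ n, ¬(t₁ < E.etime n ∧ E.etime n < t₂)) (h : (E.state t₁).IDConsistent) :
    (E.state t₂).IDConsistent := by
  by_cases hjump : ∃ n, t₁ < E.etime n ∧ E.etime n = t₂
  · obtain ⟨n, hlt, rfl⟩ := hjump
    exact (E.jump n t₁ h₀ hlt hno).idConsistent (h.decay _)
  · have hflow : ∀ n, ¬(t₁ < E.etime n ∧ E.etime n ≤ t₂) := fun n ⟨hlt, hle⟩ =>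
      hle.lt_or_eq.elim (fun h' => hno n ⟨hlt, h'⟩) fun h' => hjump ⟨n, hlt, h'⟩
    rw [E.flow t₁ t₂ h₀ h₁₂ hflow]
    exact h.decay _

theorem idConsistent_of_le_etime (n : ℕ) {t : ℝ} (h₀ : 0 ≤ t) (ht : t ≤ E.etime n) :
    (E.state t).IDConsistent := by
  induction n generalizing t with
  | zero =>
    refine E.idConsistent_of_no_exchange_between le_rfl h₀ ?_ E.init.idConsistent
    rintro p ⟨-, hp⟩
    exact (E.etime_strictMono.monotone p.zero_le).not_gt (hp.trans_le ht)
  | succ n ih =>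
    rcases le_or_gt t (E.etime n) with hle | hlt
    · exact ih h₀ hle
    refine E.idConsistent_of_no_exchange_between (E.etime_pos n).le hlt.le ?_
      (ih (E.etime_pos n).le le_rfl)
    rintro p ⟨hnp, hpt⟩
    have : n < p := E.etime_strictMono.lt_iff_lt.mp hnp
    have : p < n + 1 := E.etime_strictMono.lt_iff_lt.mp (hpt.trans_le ht)
    omega

end Execution

end Invariant

theorem vertex_always_covered_general {V : Type*} [Fintype V] {m : ℕ}
    (G : Env V) (s : Fin m → ℝ) (Φ : V → ℝ → ℝ) (Δlow Δbar ΔH : ℝ)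
    (E : Execution G m s Φ Δlow Δbar ΔH) :
    ∀ (k : V) (t : ℝ), 0 ≤ t → ∃ i : Fin m, k ∈ (E.state t).P i := by
  intro k t ht
  obtain ⟨n, hn⟩ := E.exists_le_etime t
  exact ⟨_, E.idConsistent_of_le_etime n ht hn k⟩

/-- Theorem 3, statement 1.  Under Assumption 1 and
Algorithm 1 updates, every vertex `k ∈ Q` belongs, at every time `t ≥ 0`, to at
least one agent's coverage region `P_i`. -/
theorem vertex_always_covered {V : Type*} [Fintype V] [DecidableEq V] {m : ℕ}
    (G : Env V) (s : Fin m → ℝ) (Φ : V → ℝ → ℝ) (Δlow Δbar ΔH : ℝ)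
    (E : Execution G m s Φ Δlow Δbar ΔH) :
    ∀ (k : V) (t : ℝ), 0 ≤ t → ∃ i : Fin m, k ∈ (E.state t).P i :=
  vertex_always_covered_general G s Φ Δlow Δbar ΔH E
end
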